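/- arXiv:1907.04003 — 2 statements merged into one kernel-verified Lean document; each statement's English description precedes it below -/
import Mathlib

section
/- Recentering the pre-activations does not alter the Lipschitz norm established by spectral normalization: for a nonzero real m×n matrix W and a fixed vector m₀ ∈ ℝᵐ, the mean-spectral-normalized layer map g ↦ (W/σ(W))g − E[(W/σ(W))g]·1 + m₀, where E[h] denotes the mean of the entries of h and 1 is the all-ones vector in ℝᵐ, is 1-Lipschitz with respect to Euclidean norms. -/
/-!
Dividing by the spectral norm makes the linear part have operator norm at most `1`. Subtracting
the mean is the orthogonal projection onto the complement of the all-ones vector `𝟙`, because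
`⟪𝟙, h⟫ / ‖𝟙‖² = E[h]`; projections are `1`-Lipschitz, and adding `m₀` is an isometry.
-/

/-- The spectral norm of a real `m × n` matrix: the operator norm of the induced
linear map between Euclidean spaces. -/
noncomputable def matSpectralNorm {m n : ℕ} (W : Matrix (Fin m) (Fin n) ℝ) : ℝ :=
  ‖LinearMap.toContinuousLinearMap (Matrix.toEuclideanLin W)‖

/-- The mean of the entries of a vector in `ℝᵐ`. -/
noncomputable def vecMean {m : ℕ} (h : EuclideanSpace ℝ (Fin m)) : ℝ :=
  (∑ i, h i) / m

open RealInnerProductSpace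

theorem norm_inv_norm_smul_le_one {E : Type*} [SeminormedAddCommGroup E] [NormedSpace ℝ E]
    (x : E) : ‖‖x‖⁻¹ • x‖ ≤ 1 := by
  rw [norm_smul, norm_inv, norm_norm]
  exact inv_mul_le_one_of_le₀ le_rfl (norm_nonneg x)

theorem lipschitzWith_toEuclideanLin_inv_matSpectralNorm_smul {m n : ℕ}
    (W : Matrix (Fin m) (Fin n) ℝ) :
    LipschitzWith 1 (Matrix.toEuclideanLin ((matSpectralNorm W)⁻¹ • W)) := by
  have h := norm_inv_norm_smul_le_one (LinearMap.toContinuousLinearMap (Matrix.toEuclideanLin W))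
  rw [← map_smul, ← map_smul, ← NNReal.coe_one] at h
  exact ContinuousLinearMap.lipschitzWith_of_opNorm_le h

def allOnes (m : ℕ) : EuclideanSpace ℝ (Fin m) := WithLp.toLp 2 fun _ => 1

theorem inner_allOnes {m : ℕ} (h : EuclideanSpace ℝ (Fin m)) : ⟪allOnes m, h⟫ = ∑ i, h i := by
  simp [allOnes, PiLp.inner_apply]

theorem norm_allOnes_sq (m : ℕ) : ‖allOnes m‖ ^ 2 = m := by
  simp [allOnes, EuclideanSpace.norm_sq_eq]

theorem starProjection_span_allOnes {m : ℕ} (h : EuclideanSpace ℝ (Fin m)) :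
    (ℝ ∙ allOnes m).starProjection h = vecMean h • allOnes m := by
  rw [Submodule.starProjection_singleton, inner_allOnes, norm_allOnes_sq]
  rfl

theorem toLp_sub_vecMean_eq_starProjection_orthogonal {m : ℕ} (h : EuclideanSpace ℝ (Fin m)) :
    WithLp.toLp 2 (fun i => h i - vecMean h) = (ℝ ∙ allOnes m)ᗮ.starProjection h := by
  rw [Submodule.starProjection_orthogonal_val, starProjection_span_allOnes]
  ext i
  simp [allOnes]

theorem msn_layer_one_lipschitz_general {m n : ℕ} (W : Matrix (Fin m) (Fin n) ℝ)
    (m₀ : EuclideanSpace ℝ (Fin m)) :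
    LipschitzWith 1 (fun g : EuclideanSpace ℝ (Fin n) =>
      (WithLp.toLp 2 (fun i => Matrix.toEuclideanLin ((matSpectralNorm W)⁻¹ • W) g i
          - vecMean (Matrix.toEuclideanLin ((matSpectralNorm W)⁻¹ • W) g) + m₀ i) :
        EuclideanSpace ℝ (Fin m))) := by
  set A := Matrix.toEuclideanLin ((matSpectralNorm W)⁻¹ • W)
  have hlayer : (fun g => (WithLp.toLp 2 (fun i => A g i - vecMean (A g) + m₀ i) :
      EuclideanSpace ℝ (Fin m))) = fun g => (ℝ ∙ allOnes m)ᗮ.starProjection (A g) + m₀ := by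
    funext g
    rw [← toLp_sub_vecMean_eq_starProjection_orthogonal]
    rfl
  rw [hlayer]
  have h := ((ℝ ∙ allOnes m)ᗮ.lipschitzWith_starProjection.comp
    (lipschitzWith_toEuclideanLin_inv_matSpectralNorm_smul W)).add (LipschitzWith.const m₀)
  rwa [mul_one, add_zero] at h

/-- The mean-spectral-normalized (MSN) layer map
`g ↦ (W/σ(W)) g − E[(W/σ(W)) g]·1 + m₀` is `1`-Lipschitz: recentering the
pre-activations does not alter the Lipschitz norm established by spectral
normalization. -/
theorem msn_layer_one_lipschitz {m n : ℕ} (W : Matrix (Fin m) (Fin n) ℝ)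
    (hW : W ≠ 0) (m₀ : EuclideanSpace ℝ (Fin m)) :
    LipschitzWith 1 (fun g : EuclideanSpace ℝ (Fin n) =>
      (WithLp.toLp 2 (fun i => Matrix.toEuclideanLin ((matSpectralNorm W)⁻¹ • W) g i
          - vecMean (Matrix.toEuclideanLin ((matSpectralNorm W)⁻¹ • W) g) + m₀ i) :
        EuclideanSpace ℝ (Fin m))) :=
  msn_layer_one_lipschitz_general W m₀
end

section
/- Let W be a real m×n matrix whose largest singular value σ(W) > 0 is simple, with unit left and right singular vectors u₁, v₁ (W v₁ = σ(W) u₁, Wᵀ u₁ = σ(W) v₁). Then the spectral normalization map N(W) = W/σ(W) is differentiable at W, and its derivative in the direction of a matrix H is (1/σ(W))·(H − (u₁ᵀ H v₁)·Ŵ), where Ŵ = W/σ(W); in particular, taking H = I_{ij} (the matrix with 1 in entry (i,j) and 0 elsewhere), ∂Ŵ/∂W_{ij} = (1/σ(W))·(I_{ij} − [u₁ v₁ᵀ]_{ij}·Ŵ). -/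
open scoped Matrix

attribute [local instance] Matrix.frobeniusNormedAddCommGroup Matrix.frobeniusNormedSpace

/-- The continuous linear functional `H ↦ u₁ᵀ H v₁ = u₁ ⬝ᵥ (H v₁)` on matrices. -/
noncomputable def singularPairing {m n : ℕ} (u : Fin m → ℝ) (v : Fin n → ℝ) :
    Matrix (Fin m) (Fin n) ℝ →L[ℝ] ℝ :=
  LinearMap.toContinuousLinearMap
    { toFun := fun H : Matrix (Fin m) (Fin n) ℝ => u ⬝ᵥ H.mulVec v
      map_add' := fun A B => by simp [Matrix.add_mulVec, dotProduct_add]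
      map_smul' := fun c A => by simp [Matrix.smul_mulVec, dotProduct_smul] }

/-- The continuous linear map `H ↦ (1/σ(W)) (H − (u₁ᵀ H v₁) Ŵ)`,
where `Ŵ = W/σ(W)`. -/
noncomputable def snDeriv {m n : ℕ} (W : Matrix (Fin m) (Fin n) ℝ)
    (u : Fin m → ℝ) (v : Fin n → ℝ) :
    Matrix (Fin m) (Fin n) ℝ →L[ℝ] Matrix (Fin m) (Fin n) ℝ :=
  (matSpectralNorm W)⁻¹ •
    (ContinuousLinearMap.id ℝ (Matrix (Fin m) (Fin n) ℝ) -
      (singularPairing u v).smulRight ((matSpectralNorm W)⁻¹ • W))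

/-! The spectral norm of `W` is the operator norm `σ = ‖T‖` of `T : ℓ²(n) → ℓ²(m)`. Testing `T + H`
on `v₁` against `u₁` gives `‖T + H‖ ≥ σ + ⟪u₁, H v₁⟫`. Conversely, since `‖T x‖ = σ ‖x‖` only on
the line through `v₁`, compactness of the unit ball gives a spectral gap `‖T w‖² ≤ μ ‖w‖²` with
`μ < σ²` on `v₁ᗮ`. Writing a unit vector as `a v₁ + w` with `w ⊥ v₁`, this gap absorbs the cross
terms, and `‖T + H‖ ≤ σ + ⟪u₁, H v₁⟫ + O(‖H‖²)`. Hence `σ` has derivative `H ↦ u₁ᵀ H v₁` at `W`,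
and the formula for `W ↦ σ(W)⁻¹ • W` is the product rule. -/

open scoped InnerProductSpace

section Orthogonal

variable {E : Type*} [NormedAddCommGroup E] [InnerProductSpace ℝ E] {v : E}

theorem inner_sub_inner_smul_self (hv : ‖v‖ = 1) (x : E) : ⟪v, x - ⟪v, x⟫_ℝ • v⟫_ℝ = 0 := by
  rw [inner_sub_right, real_inner_smul_right, real_inner_self_eq_norm_sq, hv]
  ring

theorem sq_inner_add_sq_norm_sub_inner_smul (hv : ‖v‖ = 1) (x : E) :
    ⟪v, x⟫_ℝ ^ 2 + ‖x - ⟪v, x⟫_ℝ • v‖ ^ 2 = ‖x‖ ^ 2 := by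
  have h := norm_add_sq_real (⟪v, x⟫_ℝ • v) (x - ⟪v, x⟫_ℝ • v)
  rw [add_sub_cancel, real_inner_smul_left, inner_sub_inner_smul_self hv, norm_smul, hv,
    Real.norm_eq_abs, mul_one, sq_abs] at h
  linarith

end Orthogonal

namespace ContinuousLinearMap

variable {E F : Type*} [NormedAddCommGroup E] [InnerProductSpace ℝ E]
  [NormedAddCommGroup F] [InnerProductSpace ℝ F]

theorem adjoint_comp_self_apply_of_norm_apply_eq [CompleteSpace E] [CompleteSpace F]
    (T : E →L[ℝ] F) {x : E} (hx : ‖T x‖ = ‖T‖ * ‖x‖) :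
    (adjoint T ∘L T) x = ‖T‖ ^ 2 • x := by
  set σ := ‖T‖
  have hinner : ⟪(adjoint T ∘L T) x, σ ^ 2 • x⟫_ℝ = σ ^ 4 * ‖x‖ ^ 2 := by
    rw [real_inner_smul_right, comp_apply, adjoint_inner_left, real_inner_self_eq_norm_sq, hx]
    ring
  have hnorm : ‖(adjoint T ∘L T) x‖ ≤ σ ^ 2 * ‖x‖ := by
    simpa only [norm_adjoint_comp_self, sq] using le_opNorm (adjoint T ∘L T) x
  rw [← sub_eq_zero, ← norm_eq_zero, ← sq_eq_zero_iff]
  refine le_antisymm ?_ (sq_nonneg _)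
  rw [norm_sub_sq_real, hinner, norm_smul, Real.norm_of_nonneg (by positivity)]
  nlinarith [norm_nonneg ((adjoint T ∘L T) x), norm_nonneg x]

theorem exists_lt_sq_opNorm_bound_on_orthogonal [ProperSpace E] {T : E →L[ℝ] F} (hT : 0 < ‖T‖)
    {v : E} (hv : ∀ x, ‖T x‖ = ‖T‖ * ‖x‖ → ∃ c : ℝ, x = c • v) :
    ∃ μ < ‖T‖ ^ 2, ∀ w, ⟪v, w⟫_ℝ = 0 → ‖T w‖ ^ 2 ≤ μ * ‖w‖ ^ 2 := by
  set S := Metric.closedBall (0 : E) 1 ∩ {w | ⟪v, w⟫_ℝ = 0}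
  have hS : IsCompact S :=
    (isCompact_closedBall 0 1).inter_right (isClosed_eq (by fun_prop) continuous_const)
  obtain ⟨w₀, ⟨hw₀1, hw₀v⟩, hmax⟩ :=
    hS.exists_isMaxOn ⟨0, by simp [S]⟩ (by fun_prop : Continuous fun w => ‖T w‖).continuousOn
  rw [mem_closedBall_zero_iff] at hw₀1
  have hle : ‖T w₀‖ ≤ ‖T‖ * ‖w₀‖ := T.le_opNorm w₀
  have hlt : ‖T w₀‖ < ‖T‖ := by
    refine lt_of_le_of_ne (hle.trans (mul_le_of_le_one_right hT.le hw₀1)) fun h => ?_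
    obtain ⟨c, rfl⟩ := hv w₀ (le_antisymm hle (by rw [h]; exact mul_le_of_le_one_right hT.le hw₀1))
    have : c • v = 0 := inner_self_eq_zero.1 (by rw [real_inner_smul_left, hw₀v, mul_zero])
    rw [this, map_zero, norm_zero] at h
    exact hT.ne h
  refine ⟨‖T w₀‖ ^ 2, pow_lt_pow_left₀ hlt (norm_nonneg _) two_ne_zero, fun w hw => ?_⟩
  rcases eq_or_ne w 0 with rfl | hw0
  · simp
  have hwS : ‖w‖⁻¹ • w ∈ S :=
    ⟨by simp [norm_smul, inv_mul_cancel₀ (norm_ne_zero_iff.2 hw0)],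
      by simp [real_inner_smul_right, hw]⟩
  have : ‖T (‖w‖⁻¹ • w)‖ ≤ ‖T w₀‖ := hmax hwS
  rw [map_smul, norm_smul, norm_inv, norm_norm] at this
  rw [← mul_pow]
  gcongr
  rwa [inv_mul_le_iff₀ (norm_pos_iff.2 hw0), mul_comm] at this

theorem abs_inner_apply_le (u : F) (H : E →L[ℝ] F) (v : E) :
    |⟪u, H v⟫_ℝ| ≤ ‖u‖ * ‖H‖ * ‖v‖ :=
  calc |⟪u, H v⟫_ℝ| ≤ ‖u‖ * ‖H v‖ := abs_real_inner_le_norm _ _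
    _ ≤ ‖u‖ * ‖H‖ * ‖v‖ := by rw [mul_assoc]; gcongr; exact H.le_opNorm v

section Estimates

variable {T H : E →L[ℝ] F} {u : F} {v : E} {μ : ℝ}

theorem apply_eq_smul_add_apply_sub (hTv : T v = ‖T‖ • u) (x : E) :
    T x = (⟪v, x⟫_ℝ * ‖T‖) • u + T (x - ⟪v, x⟫_ℝ • v) := by
  conv_lhs => rw [← add_sub_cancel (⟪v, x⟫_ℝ • v) x]
  rw [map_add, map_smul, hTv, smul_smul]

theorem sq_norm_apply_le_of_gap (hu : ‖u‖ = 1) (hv : ‖v‖ = 1) (hTv : T v = ‖T‖ • u)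
    (hTu : ∀ w, ⟪v, w⟫_ℝ = 0 → ⟪u, T w⟫_ℝ = 0)
    (hμ : ∀ w, ⟪v, w⟫_ℝ = 0 → ‖T w‖ ^ 2 ≤ μ * ‖w‖ ^ 2) (x : E) :
    ‖T x‖ ^ 2 ≤ ‖T‖ ^ 2 * ⟪v, x⟫_ℝ ^ 2 + μ * ‖x - ⟪v, x⟫_ℝ • v‖ ^ 2 := by
  have hw := inner_sub_inner_smul_self hv x
  rw [apply_eq_smul_add_apply_sub hTv, norm_add_sq_real, real_inner_smul_left, hTu _ hw,
    norm_smul, hu, Real.norm_eq_abs, mul_one, mul_zero, mul_zero, add_zero, sq_abs]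
  linarith [hμ _ hw]

theorem inner_apply_apply_le (hu : ‖u‖ = 1) (hv : ‖v‖ = 1) (hTv : T v = ‖T‖ • u) {x : E}
    (hx : ‖x‖ = 1) :
    ⟪T x, H x⟫_ℝ ≤ ‖T‖ * ⟪u, H v⟫_ℝ + 3 * ‖T‖ * ‖H‖ * ‖x - ⟪v, x⟫_ℝ • v‖ := by
  set a := ⟪v, x⟫_ℝ
  set w := x - a • v
  set σ := ‖T‖
  set s := ‖H‖
  set t := ‖w‖
  set L := ⟪u, H v⟫_ℝ
  have hat : a ^ 2 + t ^ 2 = 1 := by rw [sq_inner_add_sq_norm_sub_inner_smul hv, hx, one_pow]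
  have hHx : H x = a • H v + H w := by
    conv_lhs => rw [← add_sub_cancel (a • v) x]
    rw [map_add, map_smul]
  have hL : |L| ≤ s := by simpa [hu, hv] using abs_inner_apply_le u H v
  have hr : |⟪u, H w⟫_ℝ| ≤ s * t := by simpa [hu] using abs_inner_apply_le u H w
  have hq : |⟪T w, H x⟫_ℝ| ≤ σ * t * s :=
    calc |⟪T w, H x⟫_ℝ| ≤ ‖T w‖ * ‖H x‖ := abs_real_inner_le_norm _ _
      _ ≤ (σ * t) * (s * ‖x‖) := by gcongr <;> exact le_opNorm _ _
      _ = σ * t * s := by rw [hx, mul_one]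
  have hexp : ⟪T x, H x⟫_ℝ = a ^ 2 * σ * L + a * σ * ⟪u, H w⟫_ℝ + ⟪T w, H x⟫_ℝ := by
    rw [apply_eq_smul_add_apply_sub hTv x, inner_add_left, real_inner_smul_left]
    nth_rewrite 1 [hHx]
    rw [inner_add_right, real_inner_smul_right]
    ring
  have hσ : 0 ≤ σ := norm_nonneg T
  have ht : t ≤ 1 := by nlinarith [sq_nonneg a, norm_nonneg w]
  have ha : |a| ≤ 1 := by rw [← sq_le_one_iff_abs_le_one]; nlinarith [sq_nonneg t]
  have h₁ : a ^ 2 * σ * L ≤ σ * L + σ * s * t := by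
    have hsL : 0 ≤ s + L := by linarith [neg_le_abs L]
    have htt : 0 ≤ t - t ^ 2 := by nlinarith [norm_nonneg w]
    rw [show a ^ 2 = 1 - t ^ 2 by linarith]
    nlinarith [mul_nonneg (mul_nonneg hσ (sq_nonneg t)) hsL,
      mul_nonneg (mul_nonneg hσ (norm_nonneg H)) htt]
  have h₂ : a * σ * ⟪u, H w⟫_ℝ ≤ σ * s * t :=
    calc a * σ * ⟪u, H w⟫_ℝ ≤ |a| * σ * |⟪u, H w⟫_ℝ| := by
          rw [← abs_of_nonneg hσ, ← abs_mul, ← abs_mul, abs_of_nonneg hσ]; exact le_abs_self _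
      _ ≤ 1 * σ * (s * t) := by gcongr
      _ = σ * s * t := by ring
  linarith [le_of_abs_le hq]

theorem sq_norm_add_apply_le_of_gap (hu : ‖u‖ = 1) (hv : ‖v‖ = 1) (hTv : T v = ‖T‖ • u)
    (hTu : ∀ w, ⟪v, w⟫_ℝ = 0 → ⟪u, T w⟫_ℝ = 0)
    (hμ : ∀ w, ⟪v, w⟫_ℝ = 0 → ‖T w‖ ^ 2 ≤ μ * ‖w‖ ^ 2) (hμT : μ < ‖T‖ ^ 2) {x : E}
    (hx : ‖x‖ = 1) :
    ‖(T + H) x‖ ^ 2 ≤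
      ‖T‖ ^ 2 + 2 * ‖T‖ * ⟪u, H v⟫_ℝ + (1 + 9 * ‖T‖ ^ 2 / (‖T‖ ^ 2 - μ)) * ‖H‖ ^ 2 := by
  set σ := ‖T‖
  set s := ‖H‖
  set t := ‖x - ⟪v, x⟫_ℝ • v‖
  set ε := σ ^ 2 - μ
  have hε : 0 < ε := sub_pos.2 hμT
  have hTx : ‖T x‖ ^ 2 ≤ σ ^ 2 - ε * t ^ 2 := by
    have hat := sq_inner_add_sq_norm_sub_inner_smul hv x
    rw [hx, one_pow] at hat
    linear_combination sq_norm_apply_le_of_gap hu hv hTv hTu hμ x + σ ^ 2 * hat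
  have hHx : ‖H x‖ ^ 2 ≤ s ^ 2 := by
    gcongr
    simpa [hx] using H.le_opNorm x
  have hquad : 6 * σ * s * t - ε * t ^ 2 ≤ 9 * σ ^ 2 / ε * s ^ 2 := by
    rw [div_mul_eq_mul_div, le_div_iff₀ hε]
    nlinarith [sq_nonneg (ε * t - 3 * σ * s)]
  rw [add_apply, norm_add_sq_real]
  calc ‖T x‖ ^ 2 + 2 * ⟪T x, H x⟫_ℝ + ‖H x‖ ^ 2
      ≤ (σ ^ 2 - ε * t ^ 2) + 2 * (σ * ⟪u, H v⟫_ℝ + 3 * σ * s * t) + s ^ 2 := by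
        gcongr
        exact inner_apply_apply_le hu hv hTv hx
    _ = σ ^ 2 + 2 * σ * ⟪u, H v⟫_ℝ + s ^ 2 + (6 * σ * s * t - ε * t ^ 2) := by ring
    _ ≤ σ ^ 2 + 2 * σ * ⟪u, H v⟫_ℝ + (1 + 9 * σ ^ 2 / ε) * s ^ 2 := by linarith

theorem opNorm_add_le_of_gap (hT : 0 < ‖T‖) (hu : ‖u‖ = 1) (hv : ‖v‖ = 1)
    (hTv : T v = ‖T‖ • u) (hTu : ∀ w, ⟪v, w⟫_ℝ = 0 → ⟪u, T w⟫_ℝ = 0)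
    (hμ : ∀ w, ⟪v, w⟫_ℝ = 0 → ‖T w‖ ^ 2 ≤ μ * ‖w‖ ^ 2) (hμT : μ < ‖T‖ ^ 2) (hH : ‖H‖ ≤ ‖T‖) :
    ‖T + H‖ ≤
      ‖T‖ + ⟪u, H v⟫_ℝ + (1 + 9 * ‖T‖ ^ 2 / (‖T‖ ^ 2 - μ)) / (2 * ‖T‖) * ‖H‖ ^ 2 := by
  set σ := ‖T‖
  set L := ⟪u, H v⟫_ℝ
  set K := 1 + 9 * σ ^ 2 / (σ ^ 2 - μ)
  have hK : 0 ≤ K := by have := sub_pos.2 hμT; positivity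
  set c := K / (2 * σ) * ‖H‖ ^ 2
  have hb : 0 ≤ σ + L + c := by
    have : |L| ≤ ‖H‖ := by simpa [hu, hv] using abs_inner_apply_le u H v
    have : 0 ≤ c := by positivity
    linarith [neg_abs_le L]
  have hb2 : σ ^ 2 + 2 * σ * L + K * ‖H‖ ^ 2 ≤ (σ + L + c) ^ 2 := by
    have : 2 * σ * c = K * ‖H‖ ^ 2 := by simp only [c]; field_simp
    nlinarith [sq_nonneg (L + c)]
  refine opNorm_le_of_unit_norm hb fun x hx => ?_
  exact (sq_le_sq₀ (norm_nonneg _) hb).1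
    ((sq_norm_add_apply_le_of_gap hu hv hTv hTu hμ hμT hx).trans hb2)

theorem add_inner_apply_le_opNorm_add (hu : ‖u‖ = 1) (hv : ‖v‖ = 1)
    (hTv : T v = ‖T‖ • u) (H : E →L[ℝ] F) :
    ‖T‖ + ⟪u, H v⟫_ℝ ≤ ‖T + H‖ := by
  have h : ⟪u, (T + H) v⟫_ℝ = ‖T‖ + ⟪u, H v⟫_ℝ := by
    rw [add_apply, inner_add_right, hTv, real_inner_smul_right, real_inner_self_eq_norm_sq, hu,
      one_pow, mul_one]
  have := (le_abs_self _).trans (abs_inner_apply_le u (T + H) v)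
  rwa [h, hu, hv, one_mul, mul_one] at this

end Estimates

open Asymptotics Filter in
theorem hasFDerivAt_opNorm [ProperSpace E] [CompleteSpace F] {T : E →L[ℝ] F} {u : F} {v : E}
    (hT : 0 < ‖T‖) (hu : ‖u‖ = 1) (hv : ‖v‖ = 1) (hTv : T v = ‖T‖ • u)
    (hTu : adjoint T u = ‖T‖ • v) (hsimple : ∀ x, ‖T x‖ = ‖T‖ * ‖x‖ → ∃ c : ℝ, x = c • v) :
    HasFDerivAt (fun A : E →L[ℝ] F => ‖A‖) ((innerSL ℝ u).comp (apply ℝ F v)) T := by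
  obtain ⟨μ, hμT, hμ⟩ := exists_lt_sq_opNorm_bound_on_orthogonal hT hsimple
  have hTu' : ∀ w, ⟪v, w⟫_ℝ = 0 → ⟪u, T w⟫_ℝ = 0 := fun w hw => by
    rw [← adjoint_inner_left, hTu, real_inner_smul_left, hw, mul_zero]
  rw [hasFDerivAt_iff_isLittleO_nhds_zero]
  refine IsBigO.trans_isLittleO ?_ (isLittleO_norm_pow_id one_lt_two)
  set C := (1 + 9 * ‖T‖ ^ 2 / (‖T‖ ^ 2 - μ)) / (2 * ‖T‖)
  have hC : 0 ≤ C := by have := sub_pos.2 hμT; positivity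
  refine IsBigO.of_bound C ?_
  filter_upwards [Metric.closedBall_mem_nhds 0 hT] with H hH
  rw [mem_closedBall_zero_iff] at hH
  have hlow := add_inner_apply_le_opNorm_add hu hv hTv H
  have hup : ‖T + H‖ ≤ ‖T‖ + ⟪u, H v⟫_ℝ + C * ‖H‖ ^ 2 :=
    opNorm_add_le_of_gap hT hu hv hTv hTu' hμ hμT hH
  have := mul_nonneg hC (sq_nonneg ‖H‖)
  rw [comp_apply, apply_apply, innerSL_apply_apply, norm_pow, norm_norm, Real.norm_eq_abs, abs_le]
  constructor <;> linarith

end ContinuousLinearMap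

namespace Matrix

variable {m n : Type*} [Fintype m] [Fintype n] [DecidableEq n]

noncomputable def toEuclideanContinuousLinearMap :
    Matrix m n ℝ →L[ℝ] EuclideanSpace ℝ n →L[ℝ] EuclideanSpace ℝ m :=
  LinearMap.toContinuousLinearMap (toEuclideanLin.trans LinearMap.toContinuousLinearMap).toLinearMap

theorem ofLp_toEuclideanContinuousLinearMap_apply (A : Matrix m n ℝ) (x : EuclideanSpace ℝ n) :
    (toEuclideanContinuousLinearMap A x).ofLp = A *ᵥ x.ofLp := rfl

theorem adjoint_toEuclideanContinuousLinearMap [DecidableEq m] (A : Matrix m n ℝ) :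
    ContinuousLinearMap.adjoint (toEuclideanContinuousLinearMap A) =
      toEuclideanContinuousLinearMap Aᵀ := by
  rw [← conjTranspose_eq_transpose_of_trivial]
  show _ = LinearMap.toContinuousLinearMap (toEuclideanLin Aᴴ)
  rw [toEuclideanLin_conjTranspose_eq_adjoint, LinearMap.adjoint_toContinuousLinearMap]
  rfl

end Matrix

open Matrix ContinuousLinearMap in
theorem hasFDerivAt_matSpectralNorm {m n : ℕ} (W : Matrix (Fin m) (Fin n) ℝ)
    (u₁ : EuclideanSpace ℝ (Fin m)) (v₁ : EuclideanSpace ℝ (Fin n))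
    (hσpos : 0 < matSpectralNorm W) (hu : ‖u₁‖ = 1) (hv : ‖v₁‖ = 1)
    (hWv : W.mulVec v₁ = matSpectralNorm W • (u₁ : Fin m → ℝ))
    (hWu : W.transpose.mulVec u₁ = matSpectralNorm W • (v₁ : Fin n → ℝ))
    (hsimple : ∀ v : Fin n → ℝ,
      (W.transpose * W).mulVec v = (matSpectralNorm W ^ 2) • v →
      ∃ c : ℝ, v = c • (v₁ : Fin n → ℝ)) :
    HasFDerivAt matSpectralNorm (singularPairing u₁ v₁) W := by
  set T := toEuclideanContinuousLinearMap W
  have hTv : T v₁ = ‖T‖ • u₁ := WithLp.ofLp_injective _ hWv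
  have hTu : adjoint T u₁ = ‖T‖ • v₁ := by
    rw [adjoint_toEuclideanContinuousLinearMap]
    exact WithLp.ofLp_injective _ hWu
  have hTsimple (x) (hx : ‖T x‖ = ‖T‖ * ‖x‖) : ∃ c : ℝ, x = c • v₁ := by
    have heig := adjoint_comp_self_apply_of_norm_apply_eq T hx
    rw [adjoint_toEuclideanContinuousLinearMap] at heig
    obtain ⟨c, hc⟩ := hsimple x.ofLp (by
      rw [← mulVec_mulVec]
      exact congrArg WithLp.ofLp heig)
    exact ⟨c, WithLp.ofLp_injective _ hc⟩
  refine ((hasFDerivAt_opNorm hσpos hu hv hTv hTu hTsimple).comp W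
    toEuclideanContinuousLinearMap.hasFDerivAt).congr_fderiv ?_
  ext H
  show ⟪u₁, toEuclideanContinuousLinearMap H v₁⟫_ℝ = u₁.ofLp ⬝ᵥ H *ᵥ v₁.ofLp
  rw [EuclideanSpace.inner_eq_star_dotProduct, ofLp_toEuclideanContinuousLinearMap_apply,
    star_trivial, dotProduct_comm]

theorem singularPairing_single {m n : ℕ} (u : Fin m → ℝ) (v : Fin n → ℝ) (i : Fin m)
    (j : Fin n) : singularPairing u v (Matrix.single i j 1) = u i * v j := by
  show u ⬝ᵥ Matrix.single i j 1 *ᵥ v = u i * v j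
  rw [Matrix.single_mulVec, one_mul]
  exact dotProduct_single u (v j) i

/-- If the largest singular value `σ(W) > 0` of `W` is simple — its unit left/right
singular vectors `u₁, v₁` satisfy `W v₁ = σ(W) u₁`, `Wᵀ u₁ = σ(W) v₁`, and the
eigenspace of `WᵀW` for the eigenvalue `σ(W)²` is one-dimensional (spanned by `v₁`)
— then the spectral normalization map `N(W) = W/σ(W)` is differentiable at `W`,
with derivative `H ↦ (1/σ(W)) (H − (u₁ᵀ H v₁) Ŵ)`; in particular, on the matrix
unit `I_{ij}`, the derivative is `(1/σ(W)) (I_{ij} − [u₁ v₁ᵀ]_{ij} Ŵ)`. -/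
theorem spectral_normalization_hasFDerivAt {m n : ℕ} (W : Matrix (Fin m) (Fin n) ℝ)
    (u₁ : EuclideanSpace ℝ (Fin m)) (v₁ : EuclideanSpace ℝ (Fin n))
    (hσpos : 0 < matSpectralNorm W) (hu : ‖u₁‖ = 1) (hv : ‖v₁‖ = 1)
    (hWv : W.mulVec v₁ = matSpectralNorm W • (u₁ : Fin m → ℝ))
    (hWu : W.transpose.mulVec u₁ = matSpectralNorm W • (v₁ : Fin n → ℝ))
    (hsimple : ∀ v : Fin n → ℝ,
      (W.transpose * W).mulVec v = (matSpectralNorm W ^ 2) • v →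
      ∃ c : ℝ, v = c • (v₁ : Fin n → ℝ)) :
    HasFDerivAt (fun M : Matrix (Fin m) (Fin n) ℝ => (matSpectralNorm M)⁻¹ • M)
      (snDeriv W u₁ v₁) W ∧
    ∀ i : Fin m, ∀ j : Fin n,
      snDeriv W u₁ v₁ (Matrix.single i j 1) =
        (matSpectralNorm W)⁻¹ •
          (Matrix.single i j 1 - (u₁ i * v₁ j) • ((matSpectralNorm W)⁻¹ • W)) := by
  have hσ := hasFDerivAt_matSpectralNorm W u₁ v₁ hσpos hu hv hWv hWu hsimple
  refine ⟨(((hasFDerivAt_inv hσpos.ne').comp W hσ).smul (hasFDerivAt_id W)).congr_fderiv ?_,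
    fun i j => ?_⟩
  · -- `simp` does not see through the two defeq topologies on matrices, so compare entries
    ext H i j
    change (matSpectralNorm W)⁻¹ * H i j
        + singularPairing u₁ v₁ H * -(matSpectralNorm W ^ 2)⁻¹ * W i j =
      (matSpectralNorm W)⁻¹ * (H i j - singularPairing u₁ v₁ H * ((matSpectralNorm W)⁻¹ * W i j))
    ring
  · simp only [snDeriv, smul_apply, sub_apply, ContinuousLinearMap.id_apply,
      ContinuousLinearMap.smulRight_apply, singularPairing_single]
end
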